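/- DM is semantically admissible for support: for any base B and formula φ, if ⊩_B φ→⊥ then ⊩_B φ⊥. -/

import Mathlib

/-- Literals: assertions `pos c` and denials `neg c` of contents `c`. -/
inductive Lit (C : Type) : Type
  | pos : C → Lit C
  | neg : C → Lit C

/-- Dual literal: swaps assertion and denial. -/
def Lit.dual {C : Type} : Lit C → Lit C
  | .pos c => .neg c
  | .neg c => .pos c

/-- Formulas over literals. -/
inductive Form (C : Type) : Type
  | lit : Lit C → Form C
  | bot : Form C
  | top : Form C
  | and : Form C → Form C → Form C
  | or  : Form C → Form C → Form C
  | imp : Form C → Form C → Form C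

/-- The de Morgan dual operator on formulas. -/
def Form.dual {C : Type} : Form C → Form C
  | .lit l => .lit l.dual
  | .bot => .top
  | .top => .bot
  | .and φ ψ => .or φ.dual ψ.dual
  | .or φ ψ => .and φ.dual ψ.dual
  | .imp φ ψ => .and φ ψ.dual

/-- A valuation: maps literals to {0,1} with `v (neg c) = 1 - v (pos c)`. -/
structure Val (C : Type) where
  v : Lit C → ℕ
  le_one : ∀ l, v l ≤ 1
  dual_neg : ∀ c : C, v (Lit.neg c) = 1 - v (Lit.pos c)

/-- Truth-functional extension of a valuation to formulas. -/
def Val.eval {C : Type} (v : Val C) : Form C → ℕ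
  | .lit l => v.v l
  | .bot => 0
  | .top => 1
  | .and φ ψ => min (v.eval φ) (v.eval ψ)
  | .or φ ψ => max (v.eval φ) (v.eval ψ)
  | .imp φ ψ => max (1 - v.eval φ) (v.eval ψ)

/-- Classical consequence. -/
def Entails {C : Type} (Γ : Set (Form C)) (φ : Form C) : Prop :=
  ∀ v : Val C, (∀ γ ∈ Γ, v.eval γ = 1) → v.eval φ = 1

/-- The natural deduction system NK±: intuitionistic rules plus DM and EXC. -/
inductive NK {C : Type} : Set (Form C) → Form C → Prop
  | hyp {Γ} {φ : Form C} : φ ∈ Γ → NK Γ φ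
  | topI {Γ} : NK Γ .top
  | botE {Γ} {φ : Form C} : NK Γ .bot → NK Γ φ
  | impI {Γ} {φ ψ : Form C} : NK (insert φ Γ) ψ → NK Γ (.imp φ ψ)
  | impE {Γ} {φ ψ : Form C} : NK Γ (.imp φ ψ) → NK Γ φ → NK Γ ψ
  | andI {Γ} {φ ψ : Form C} : NK Γ φ → NK Γ ψ → NK Γ (.and φ ψ)
  | andE1 {Γ} {φ ψ : Form C} : NK Γ (.and φ ψ) → NK Γ φ
  | andE2 {Γ} {φ ψ : Form C} : NK Γ (.and φ ψ) → NK Γ ψ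
  | orI1 {Γ} {φ ψ : Form C} : NK Γ φ → NK Γ (.or φ ψ)
  | orI2 {Γ} {φ ψ : Form C} : NK Γ ψ → NK Γ (.or φ ψ)
  | orE {Γ} {φ ψ χ : Form C} :
      NK Γ (.or φ ψ) → NK (insert φ Γ) χ → NK (insert ψ Γ) χ → NK Γ χ
  | dm {Γ} {φ : Form C} : NK (insert φ Γ) .bot → NK Γ φ.dual
  | exc {Γ} {φ : Form C} : NK Γ φ → NK Γ φ.dual → NK Γ .bot

/-- An atomic rule `(L₁⇒l₁),…,(Lₙ⇒lₙ) ⇒ l` (the case of an empty premiss list,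
together with `APP₁`/`APP₂`, covers both forms of atomic rule). -/
structure AtomicRule (C : Type) where
  prems : List (Set (Lit C) × Lit C)
  concl : Lit C

/-- A base is a set of atomic rules. -/
abbrev Base (C : Type) := Set (AtomicRule C)

/-- Derivability in a base.  Conclusions are `some l` (a literal) or `none` (⊥).
Closed under REF, APP₁/APP₂, ABS and DM. -/
inductive Deriv {C : Type} (B : Base C) : Set (Lit C) → Option (Lit C) → Prop
  | ref {L} {l : Lit C} : l ∈ L → Deriv B L (some l)
  | app {L} (r : AtomicRule C) : r ∈ B →
      (∀ p ∈ r.prems, Deriv B (p.1 ∪ L) (some p.2)) → Deriv B L (some r.concl)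
  | abs {L} {l : Lit C} : Deriv B L (some l) → Deriv B L (some l.dual) →
      Deriv B L none
  | dm {L} {l : Lit C} : Deriv B (insert l L) none → Deriv B L (some l.dual)

/-- Support in a base (empty context). -/
def Supp {C : Type} (B : Base C) : Form C → Prop
  | .lit l => Deriv B ∅ (some l)
  | .bot => ∀ l : Lit C, Deriv B ∅ (some l)
  | .top => True
  | .and φ ψ => Supp B φ ∧ Supp B ψ
  | .or φ ψ => ∀ X : Base C, B ⊆ X → ∀ l : Lit C,
      (∀ Y : Base C, X ⊆ Y → Supp Y φ → Deriv Y ∅ (some l)) →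
      (∀ Y : Base C, X ⊆ Y → Supp Y ψ → Deriv Y ∅ (some l)) →
      Deriv X ∅ (some l)
  | .imp φ ψ => ∀ X : Base C, B ⊆ X → Supp X φ → Supp X ψ

/-- Support with a context: `Γ ⊩_B φ`. -/
def SuppCtx {C : Type} (B : Base C) (Γ : Set (Form C)) (φ : Form C) : Prop :=
  ∀ X : Base C, B ⊆ X → (∀ γ ∈ Γ, Supp X γ) → Supp X φ

/-- Validity: support in every base. -/
def Valid {C : Type} (Γ : Set (Form C)) (φ : Form C) : Prop :=
  ∀ B : Base C, SuppCtx B Γ φ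

/-!
By induction on `φ`. The recurring device is to extend a base `X` by the axiom `⇒ l⊥`: there,
deriving `l` derives every literal, so `⊥` is supported wherever `l` is; conversely a derivation
of `l` in the extended base moves back to `X`, since the axiom becomes the hypothesis `l⊥`, which
together with `l` gives `⊥` by ABS, and DM discharges it.
For a literal `l`, supporting `l → ⊥` makes every literal derivable in `B` plus `⇒ l`, so
`l ⊢_B l⊥`, and ABS and DM give `l⊥`. For `(φ ∧ ψ)⊥ = φ⊥ ∨ ψ⊥`, in a base containing `⇒ l⊥` in
which every proof of `ψ⊥` yields `l`, the formula `φ → ⊥` is supported, so the induction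
hypothesis gives `φ⊥` and thus `l`. The disjunctive and implicational cases reduce to the
induction hypotheses, the latter also using semantic double-negation elimination, which holds
by the same device.
-/

def AtomicRule.ax {C : Type} (l : Lit C) : AtomicRule C := ⟨[], l⟩

open AtomicRule

section Derivability

variable {C : Type} {B X : Base C} {L : Set (Lit C)} {l : Lit C} {o : Option (Lit C)}

@[simp]
theorem Lit.dual_dual (l : Lit C) : l.dual.dual = l := by cases l <;> rfl

theorem Deriv.mono_base (hBX : B ⊆ X) (h : Deriv B L o) : Deriv X L o := by
  induction h with
  | ref hl => exact .ref hl
  | app r hr _ ih => exact .app r (hBX hr) ih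
  | abs _ _ ih₁ ih₂ => exact .abs ih₁ ih₂
  | dm _ ih => exact .dm ih

theorem Deriv.mono_ctx (h : Deriv B L o) {L' : Set (Lit C)} (hL : L ⊆ L') : Deriv B L' o := by
  induction h generalizing L' with
  | ref hl => exact .ref (hL hl)
  | app r hr _ ih => exact .app r hr fun p hp => ih p hp (Set.union_subset_union_right _ hL)
  | abs _ _ ih₁ ih₂ => exact .abs (ih₁ hL) (ih₂ hL)
  | dm _ ih => exact .dm (ih (Set.insert_subset_insert hL))

theorem Deriv.of_mem_ax (hr : ax l ∈ B) : Deriv B L (some l) :=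
  .app _ hr fun _ hp => by simp [ax] at hp

theorem Deriv.of_insert_dual_none (h : Deriv B (insert l.dual L) none) : Deriv B L (some l) := by
  simpa using Deriv.dm h

theorem Deriv.of_none (h : Deriv B L none) (l : Lit C) : Deriv B L (some l) :=
  .of_insert_dual_none (h.mono_ctx (Set.subset_insert _ _))

theorem Deriv.of_insert_ax {a : Lit C} (h : Deriv (insert (ax a) B) L o) :
    Deriv B (insert a L) o := by
  induction h with
  | ref hl => exact .ref (Set.mem_insert_of_mem _ hl)
  | app r hr _ ih =>
    rcases Set.mem_insert_iff.mp hr with rfl | hr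
    · exact .ref (Set.mem_insert _ _)
    · exact .app r hr fun p hp => by rw [Set.union_insert]; exact ih p hp
  | abs _ _ ih₁ ih₂ => exact .abs ih₁ ih₂
  | dm _ ih => exact .dm (by rw [Set.insert_comm]; exact ih)

theorem Deriv.of_insert_ax_dual (h : Deriv (insert (ax l.dual) B) L (some l)) :
    Deriv B L (some l) :=
  .of_insert_dual_none (.abs h.of_insert_ax (.ref (Set.mem_insert _ _)))

end Derivability

section Support

variable {C : Type} {B X : Base C} {l : Lit C}

theorem Supp.mono {φ : Form C} (hBX : B ⊆ X) (h : Supp B φ) : Supp X φ := by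
  induction φ generalizing B X with
  | lit l => exact h.mono_base hBX
  | bot => exact fun l => (h l).mono_base hBX
  | top => trivial
  | and φ ψ ihφ ihψ => exact ⟨ihφ hBX h.1, ihψ hBX h.2⟩
  | or φ ψ _ _ => exact fun Y hY => h Y (hBX.trans hY)
  | imp φ ψ _ _ => exact fun Y hY => h Y (hBX.trans hY)

theorem Supp.of_bot (h : Supp B .bot) (φ : Form C) : Supp B φ := by
  induction φ generalizing B with
  | lit l => exact h l
  | bot => exact h
  | top => trivial
  | and φ ψ ihφ ihψ => exact ⟨ihφ h, ihψ h⟩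
  | or φ ψ _ _ => exact fun X hX l _ _ => (h l).mono_base hX
  | imp φ ψ _ ihψ => exact fun X hX _ => ihψ fun l => (h l).mono_base hX

theorem Supp.bot_of_ax_dual_mem (hr : ax l.dual ∈ B) (h : Deriv B ∅ (some l)) :
    Supp B .bot :=
  (Deriv.abs h (.of_mem_ax hr)).of_none

theorem Supp.of_not_not {φ : Form C} (h : Supp B (.imp (.imp φ .bot) .bot)) : Supp B φ := by
  induction φ generalizing B with
  | lit l =>
    have hnot : Supp (insert (ax l.dual) B) (.imp (.lit l) .bot) :=
      fun Y hY => bot_of_ax_dual_mem (hY (Set.mem_insert _ _))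
    exact .of_insert_ax_dual (h _ (Set.subset_insert _ _) hnot l)
  | bot => exact h B subset_rfl fun _ _ => id
  | top => trivial
  | and φ ψ ihφ ihψ =>
    exact ⟨ihφ fun X hX hnφ => h X hX fun Y hY hφψ => hnφ Y hY hφψ.1,
      ihψ fun X hX hnψ => h X hX fun Y hY hφψ => hnψ Y hY hφψ.2⟩
  | or φ ψ _ _ =>
    intro X hX l hφl hψl
    have hnot : Supp (insert (ax l.dual) X) (.imp (.or φ ψ) .bot) := fun Y hY hφψ =>
      bot_of_ax_dual_mem (hY (Set.mem_insert _ _)) <| hφψ Y subset_rfl l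
        (fun Z hZ => hφl Z ((Set.subset_insert _ _).trans (hY.trans hZ)))
        (fun Z hZ => hψl Z ((Set.subset_insert _ _).trans (hY.trans hZ)))
    exact .of_insert_ax_dual (h _ (hX.trans (Set.subset_insert _ _)) hnot l)
  | imp φ ψ _ ihψ =>
    refine fun X hX hφ => ihψ fun Y hY hnψ => h Y (hX.trans hY) fun Z hZ hφψ => ?_
    exact hnψ Z hZ (hφψ Z subset_rfl (hφ.mono (hY.trans hZ)))

end Support

section Admissibility

variable {C : Type}

def DMAdmissible (φ : Form C) : Prop :=
  ∀ B : Base C, Supp B (.imp φ .bot) → Supp B φ.dual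

theorem DMAdmissible.lit (l : Lit C) : DMAdmissible (.lit l) := fun B h => by
  have hdual : Deriv B (insert l ∅) (some l.dual) :=
    (h _ (Set.subset_insert _ _) (Deriv.of_mem_ax (Set.mem_insert _ _)) l.dual).of_insert_ax
  exact .dm (.abs (.ref (Set.mem_insert _ _)) hdual)

theorem DMAdmissible.bot : DMAdmissible (C := C) .bot := fun _ _ => trivial

theorem DMAdmissible.top : DMAdmissible (C := C) .top := fun B h => h B subset_rfl trivial

theorem DMAdmissible.and {φ ψ : Form C} (hφ : DMAdmissible φ) (hψ : DMAdmissible ψ) :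
    DMAdmissible (.and φ ψ) := by
  intro B h X hX l hφl hψl
  have hnφ : Supp (insert (ax l.dual) X) (.imp φ .bot) := fun Y hY hφY => by
    have hnψ : Supp Y (.imp ψ .bot) := fun Z hZ hψZ =>
      h Z (hX.trans ((Set.subset_insert _ _).trans (hY.trans hZ))) ⟨hφY.mono hZ, hψZ⟩
    exact Supp.bot_of_ax_dual_mem (hY (Set.mem_insert _ _))
      (hψl Y ((Set.subset_insert _ _).trans hY) (hψ Y hnψ))
  exact .of_insert_ax_dual (hφl _ (Set.subset_insert _ _) (hφ _ hnφ))

theorem DMAdmissible.or {φ ψ : Form C} (hφ : DMAdmissible φ) (hψ : DMAdmissible ψ) :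
    DMAdmissible (.or φ ψ) := fun B h =>
  ⟨hφ B fun X hX hφX => h X hX fun Y hY _ hφl _ => hφl Y subset_rfl (hφX.mono hY),
    hψ B fun X hX hψX => h X hX fun Y hY _ _ hψl => hψl Y subset_rfl (hψX.mono hY)⟩

theorem DMAdmissible.imp (φ : Form C) {ψ : Form C} (hψ : DMAdmissible ψ) :
    DMAdmissible (.imp φ ψ) := fun B h =>
  ⟨Supp.of_not_not fun X hX hnφ => h X hX fun Y hY hφ => (hnφ Y hY hφ).of_bot ψ,
    hψ B fun X hX hψX => h X hX fun _ hY _ => hψX.mono hY⟩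

theorem dmAdmissible (φ : Form C) : DMAdmissible φ := by
  induction φ with
  | lit l => exact .lit l
  | bot => exact .bot
  | top => exact .top
  | and _ _ hφ hψ => exact hφ.and hψ
  | or _ _ hφ hψ => exact hφ.or hψ
  | imp φ _ _ hψ => exact hψ.imp φ

end Admissibility

/-- DM is semantically admissible for support. -/
theorem supp_dm {C : Type} (B : Base C) (φ : Form C)
    (h : Supp B (Form.imp φ .bot)) : Supp B φ.dual :=
  dmAdmissible φ B h
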